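/- arXiv:2402.16675 — 3 statements merged into one kernel-verified Lean document; each statement's English description precedes it below -/
import Mathlib

section
/- Let L ≥ 1 and let s, x, y ∈ ℂ^L with s ≠ 0 and x ≠ 0. Set c = ‖x‖² + ‖y‖² − |⟪s, y⟫|²/‖s‖² (which is positive). Then sup over β ∈ ℂ and v ∈ (0, ∞) of the function (β, v) ↦ −2L·log v − (‖x‖² + ‖y − β • s‖²)/v equals −2L·log(c/(2L)) − 2L, and the supremum is attained at β = ⟪s, y⟫/‖s‖² and v = c/(2L). -/
/-!
For fixed `v` the objective is maximized by minimizing `‖y - β • s‖²`, i.e. by projecting `y`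
orthogonally onto `ℂ ∙ s`; the residual has squared norm `‖y‖² - ‖⟪s, y⟫‖² / ‖s‖²`, so what remains
is `-2L log v - c / v`, which `log t ≤ t - 1` bounds by its value at `v = c / (2L)`.
-/

open scoped ComplexInnerProductSpace

section Projection

open scoped InnerProductSpace

variable {𝕜 E : Type*} [RCLike 𝕜] [NormedAddCommGroup E] [InnerProductSpace 𝕜 E]

theorem inner_sub_inner_div_norm_sq_smul_eq_zero (s y : E) :
    ⟪s, y - (⟪s, y⟫_𝕜 / (‖s‖ : 𝕜) ^ 2) • s⟫_𝕜 = 0 := by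
  rcases eq_or_ne s 0 with rfl | hs
  · simp
  have hs2 : (‖s‖ : 𝕜) ^ 2 ≠ 0 := by simpa using hs
  rw [inner_sub_right, inner_smul_right, inner_self_eq_norm_sq_to_K, div_mul_cancel₀ _ hs2,
    sub_self]

/-- Pythagoras, since the residual `y - β₀ • s` is orthogonal to `s`. -/
theorem norm_sub_smul_sq_eq (s y : E) (β : 𝕜) :
    ‖y - β • s‖ ^ 2 = ‖y - (⟪s, y⟫_𝕜 / (‖s‖ : 𝕜) ^ 2) • s‖ ^ 2
      + ‖(⟪s, y⟫_𝕜 / (‖s‖ : 𝕜) ^ 2 - β) • s‖ ^ 2 := by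
  set β₀ := ⟪s, y⟫_𝕜 / (‖s‖ : 𝕜) ^ 2
  have horth : ⟪(β₀ - β) • s, y - β₀ • s⟫_𝕜 = 0 := by
    rw [inner_smul_left, inner_sub_inner_div_norm_sq_smul_eq_zero, mul_zero]
  have hsplit : y - β • s = (β₀ - β) • s + (y - β₀ • s) := by
    rw [sub_smul]; abel
  simp only [hsplit, sq]
  rw [norm_add_sq_eq_norm_sq_add_norm_sq_of_inner_eq_zero _ _ horth, add_comm]

theorem norm_inner_div_norm_sq_smul_sq (s y : E) :
    ‖(⟪s, y⟫_𝕜 / (‖s‖ : 𝕜) ^ 2) • s‖ ^ 2 = ‖⟪s, y⟫_𝕜‖ ^ 2 / ‖s‖ ^ 2 := by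
  rcases eq_or_ne s 0 with rfl | hs
  · simp
  have hs' : ‖s‖ ≠ 0 := norm_ne_zero_iff.mpr hs
  rw [norm_smul, norm_div, norm_pow, RCLike.norm_ofReal, abs_norm]
  field_simp

theorem norm_sub_inner_div_norm_sq_smul_sq (s y : E) :
    ‖y - (⟪s, y⟫_𝕜 / (‖s‖ : 𝕜) ^ 2) • s‖ ^ 2 = ‖y‖ ^ 2 - ‖⟪s, y⟫_𝕜‖ ^ 2 / ‖s‖ ^ 2 := by
  have h := norm_sub_smul_sq_eq s y (0 : 𝕜)
  rw [zero_smul, sub_zero, sub_zero, norm_inner_div_norm_sq_smul_sq] at h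
  linarith

theorem norm_sub_inner_div_norm_sq_smul_le (s y : E) (β : 𝕜) :
    ‖y - (⟪s, y⟫_𝕜 / (‖s‖ : 𝕜) ^ 2) • s‖ ^ 2 ≤ ‖y - β • s‖ ^ 2 := by
  rw [norm_sub_smul_sq_eq s y β]
  exact le_add_of_nonneg_right (sq_nonneg _)

end Projection

theorem neg_mul_log_sub_div_le (n c v : ℝ) (hn : 0 < n) (hc : 0 < c) (hv : 0 < v) :
    -n * Real.log v - c / v ≤ -n * Real.log (c / n) - n := by
  have hlog : Real.log (c / (n * v)) ≤ c / (n * v) - 1 :=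
    Real.log_le_sub_one_of_pos (by positivity)
  rw [div_mul_eq_div_div, Real.log_div (by positivity) hv.ne'] at hlog
  have hscale : n * (c / n / v - 1) = c / v - n := by
    field_simp
  nlinarith [mul_le_mul_of_nonneg_left hlog hn.le]

theorem stmt2_general (L : ℕ) (hL : 1 ≤ L) (s x y : EuclideanSpace ℂ (Fin L))
    (hx : x ≠ 0) :
    0 < ‖x‖ ^ 2 + ‖y‖ ^ 2 - ‖⟪s, y⟫‖ ^ 2 / ‖s‖ ^ 2 ∧
    IsGreatest
      {r : ℝ | ∃ (β : ℂ) (v : ℝ), 0 < v ∧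
        r = -2 * (L : ℝ) * Real.log v - (‖x‖ ^ 2 + ‖y - β • s‖ ^ 2) / v}
      (-2 * (L : ℝ) * Real.log ((‖x‖ ^ 2 + ‖y‖ ^ 2 - ‖⟪s, y⟫‖ ^ 2 / ‖s‖ ^ 2) / (2 * L))
        - 2 * L) ∧
    -2 * (L : ℝ) * Real.log ((‖x‖ ^ 2 + ‖y‖ ^ 2 - ‖⟪s, y⟫‖ ^ 2 / ‖s‖ ^ 2) / (2 * L))
        - (‖x‖ ^ 2 + ‖y - (⟪s, y⟫ / (‖s‖ : ℂ) ^ 2) • s‖ ^ 2) /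
          ((‖x‖ ^ 2 + ‖y‖ ^ 2 - ‖⟪s, y⟫‖ ^ 2 / ‖s‖ ^ 2) / (2 * L)) =
      -2 * (L : ℝ) * Real.log ((‖x‖ ^ 2 + ‖y‖ ^ 2 - ‖⟪s, y⟫‖ ^ 2 / ‖s‖ ^ 2) / (2 * L))
        - 2 * L := by
  set c := ‖x‖ ^ 2 + ‖y‖ ^ 2 - ‖⟪s, y⟫‖ ^ 2 / ‖s‖ ^ 2
  have hresidual : ‖y - (⟪s, y⟫ / (‖s‖ : ℂ) ^ 2) • s‖ ^ 2 = ‖y‖ ^ 2 - ‖⟪s, y⟫‖ ^ 2 / ‖s‖ ^ 2 :=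
    norm_sub_inner_div_norm_sq_smul_sq s y
  have hc_eq : c = ‖x‖ ^ 2 + ‖y - (⟪s, y⟫ / (‖s‖ : ℂ) ^ 2) • s‖ ^ 2 := by
    rw [hresidual]; ring
  have hc : 0 < c := by
    rw [hc_eq]; positivity
  have hn : (0 : ℝ) < 2 * L := by positivity
  have hattained : -2 * (L : ℝ) * Real.log (c / (2 * L))
      - (‖x‖ ^ 2 + ‖y - (⟪s, y⟫ / (‖s‖ : ℂ) ^ 2) • s‖ ^ 2) / (c / (2 * L))
      = -2 * (L : ℝ) * Real.log (c / (2 * L)) - 2 * L := by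
    rw [← hc_eq]; field_simp
  refine ⟨hc, ⟨⟨_, c / (2 * L), by positivity, hattained.symm⟩, ?_⟩, hattained⟩
  rintro r ⟨β, v, hv, rfl⟩
  calc -2 * (L : ℝ) * Real.log v - (‖x‖ ^ 2 + ‖y - β • s‖ ^ 2) / v
      ≤ -2 * (L : ℝ) * Real.log v - c / v := by
        have hmin : ‖y - (⟪s, y⟫ / (‖s‖ : ℂ) ^ 2) • s‖ ^ 2 ≤ ‖y - β • s‖ ^ 2 :=
          norm_sub_inner_div_norm_sq_smul_le s y β
        rw [hc_eq]; gcongr ?_ - ?_ / v; linarith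
    _ ≤ -2 * (L : ℝ) * Real.log (c / (2 * L)) - 2 * L := by
        simpa only [neg_mul] using neg_mul_log_sub_div_le (2 * L) c v hn hc hv

/-- Per-channel concentration of the null-hypothesis log-likelihood
(eqs. (39)–(42)): with `c = ‖x‖² + ‖y‖² - |⟪s, y⟫|²/‖s‖² > 0`, the supremum over
`β ∈ ℂ` and `v ∈ (0,∞)` of `-2L·log v - (‖x‖² + ‖y - β•s‖²)/v` equals
`-2L·log(c/(2L)) - 2L`, attained at `β = ⟪s, y⟫/‖s‖²`, `v = c/(2L)`. -/
theorem stmt2 (L : ℕ) (hL : 1 ≤ L) (s x y : EuclideanSpace ℂ (Fin L))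
    (hs : s ≠ 0) (hx : x ≠ 0) :
    0 < ‖x‖ ^ 2 + ‖y‖ ^ 2 - ‖⟪s, y⟫‖ ^ 2 / ‖s‖ ^ 2 ∧
    IsGreatest
      {r : ℝ | ∃ (β : ℂ) (v : ℝ), 0 < v ∧
        r = -2 * (L : ℝ) * Real.log v - (‖x‖ ^ 2 + ‖y - β • s‖ ^ 2) / v}
      (-2 * (L : ℝ) * Real.log ((‖x‖ ^ 2 + ‖y‖ ^ 2 - ‖⟪s, y⟫‖ ^ 2 / ‖s‖ ^ 2) / (2 * L))
        - 2 * L) ∧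
    -2 * (L : ℝ) * Real.log ((‖x‖ ^ 2 + ‖y‖ ^ 2 - ‖⟪s, y⟫‖ ^ 2 / ‖s‖ ^ 2) / (2 * L))
        - (‖x‖ ^ 2 + ‖y - (⟪s, y⟫ / (‖s‖ : ℂ) ^ 2) • s‖ ^ 2) /
          ((‖x‖ ^ 2 + ‖y‖ ^ 2 - ‖⟪s, y⟫‖ ^ 2 / ‖s‖ ^ 2) / (2 * L)) =
      -2 * (L : ℝ) * Real.log ((‖x‖ ^ 2 + ‖y‖ ^ 2 - ‖⟪s, y⟫‖ ^ 2 / ‖s‖ ^ 2) / (2 * L))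
        - 2 * L :=
  stmt2_general L hL s x y hx
end

section
/- Let L ≥ 1, N ≥ 1, let s ∈ ℂ^L with s ≠ 0, let x₁,…,x_N, y₁,…,y_N ∈ ℂ^L with x_k ≠ 0 for every k, and let γ₁,…,γ_N ∈ ℂ with γ_k ≠ 0 for every k. Define Λ_RD(s; x, y) = Σ_{k=1}^{N} [ |⟪s, x_k⟫|² / (‖x_k‖² + ‖y_k‖²) ] / [ ‖s‖² − |⟪s, y_k⟫|² / (‖x_k‖² + ‖y_k‖²) ]. Then Λ_RD(s; (γ_k x_k)_k, (γ_k y_k)_k) = Λ_RD(s; (x_k)_k, (y_k)_k). -/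
open scoped InnerProductSpace ComplexInnerProductSpace

theorem norm_inner_smul_sq_div_norm_smul_sq_add {𝕜 E : Type*} [RCLike 𝕜] [NormedAddCommGroup E]
    [InnerProductSpace 𝕜 E] (s u x y : E) {γ : 𝕜} (hγ : γ ≠ 0) :
    ‖⟪s, γ • u⟫_𝕜‖ ^ 2 / (‖γ • x‖ ^ 2 + ‖γ • y‖ ^ 2) = ‖⟪s, u⟫_𝕜‖ ^ 2 / (‖x‖ ^ 2 + ‖y‖ ^ 2) := by
  have hγ2 : ‖γ‖ ^ 2 ≠ 0 := pow_ne_zero _ (norm_ne_zero_iff.mpr hγ)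
  rw [inner_smul_right, norm_smul, norm_smul, norm_mul, mul_pow, mul_pow, mul_pow, ← mul_add,
    mul_div_mul_left _ _ hγ2]

theorem stmt10_general (L N : ℕ)
    (s : EuclideanSpace ℂ (Fin L))
    (x y : Fin N → EuclideanSpace ℂ (Fin L))
    (γ : Fin N → ℂ) (hγ : ∀ k, γ k ≠ 0) :
    ∑ k, (‖⟪s, γ k • x k⟫‖ ^ 2 / (‖γ k • x k‖ ^ 2 + ‖γ k • y k‖ ^ 2)) /
        (‖s‖ ^ 2 - ‖⟪s, γ k • y k⟫‖ ^ 2 / (‖γ k • x k‖ ^ 2 + ‖γ k • y k‖ ^ 2)) =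
    ∑ k, (‖⟪s, x k⟫‖ ^ 2 / (‖x k‖ ^ 2 + ‖y k‖ ^ 2)) /
        (‖s‖ ^ 2 - ‖⟪s, y k⟫‖ ^ 2 / (‖x k‖ ^ 2 + ‖y k‖ ^ 2)) := by
  refine Finset.sum_congr rfl fun k _ => ?_
  rw [norm_inner_smul_sq_div_norm_smul_sq_add s (x k) _ _ (hγ k),
    norm_inner_smul_sq_div_norm_smul_sq_add s (y k) _ _ (hγ k)]

/-- Invariance of the Rao (Durbin) passive-radar statistic (Proposition 4,
eq. (29)) under the per-receiver complex scaling group 𝒢 of eq. (4), for a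
fixed signal estimate `s`. -/
theorem stmt10 (L N : ℕ) (hL : 1 ≤ L) (hN : 1 ≤ N)
    (s : EuclideanSpace ℂ (Fin L)) (hs : s ≠ 0)
    (x y : Fin N → EuclideanSpace ℂ (Fin L)) (hx : ∀ k, x k ≠ 0)
    (γ : Fin N → ℂ) (hγ : ∀ k, γ k ≠ 0) :
    ∑ k, (‖⟪s, γ k • x k⟫‖ ^ 2 / (‖γ k • x k‖ ^ 2 + ‖γ k • y k‖ ^ 2)) /
        (‖s‖ ^ 2 - ‖⟪s, γ k • y k⟫‖ ^ 2 / (‖γ k • x k‖ ^ 2 + ‖γ k • y k‖ ^ 2)) =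
    ∑ k, (‖⟪s, x k⟫‖ ^ 2 / (‖x k‖ ^ 2 + ‖y k‖ ^ 2)) /
        (‖s‖ ^ 2 - ‖⟪s, y k⟫‖ ^ 2 / (‖x k‖ ^ 2 + ‖y k‖ ^ 2)) :=
  stmt10_general L N s x y γ hγ
end

section
/- Let N ≥ 1, let s ∈ ℂ^L with s ≠ 0, let α ∈ ℂ^N, and let D = diag(d₁,…,d_N) with d_k > 0 real, and suppose α ≠ 0. Then αᴴ [ ‖s‖² · D (I_N − (Dα)(Dα)ᴴ/‖Dα‖²) D ] α = 0. In particular, the usual Wald statistic of the passive-radar problem, obtained by evaluating the quadratic form (θ̂_r,1)ᴴ ([𝒥⁻¹(θ̂₁)]_rr)⁻¹ θ̂_r,1 with ([𝒥⁻¹(θ̂₁)]_rr)⁻¹ = ‖ŝ₁‖² D (I − (Dα̂)(Dα̂)ᴴ/‖Dα̂‖²) D at the ML estimate α̂, is identically zero. -/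
/-!
The matrix `D (I - P) D` applied to `α` is already the zero vector: `D α` is the vector `v`
spanning the range of the rank-one projection `P = v vᴴ / ‖v‖²`, so `(I - P) v = 0`.
-/

open scoped Matrix ComplexOrder

namespace Matrix

variable {𝕜 n : Type*} [RCLike 𝕜] [Fintype n] [DecidableEq n]

theorem one_sub_inv_smul_vecMulVec_star_mulVec_self (v : n → 𝕜) :
    (1 - (star v ⬝ᵥ v)⁻¹ • vecMulVec v (star v)) *ᵥ v = 0 := by
  by_cases hv : v = 0
  · simp [hv]
  have hvv : star v ⬝ᵥ v ≠ 0 := mt dotProduct_star_self_eq_zero.mp hv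
  rw [sub_mulVec, one_mulVec, smul_mulVec, vecMulVec_mulVec, op_smul_eq_smul, smul_smul,
    inv_mul_cancel₀ hvv, one_smul, sub_self]

end Matrix

theorem stmt12_general (L N : ℕ)
    (s : EuclideanSpace ℂ (Fin L))
    (α : Fin N → ℂ) (d : Fin N → ℝ) :
    star α ⬝ᵥ
      ((((‖s‖ ^ 2 : ℝ) : ℂ) •
        (Matrix.diagonal (fun k => (d k : ℂ)) *
          (1 - (((∑ k, ‖(d k : ℂ) * α k‖ ^ 2 : ℝ)) : ℂ)⁻¹ •
            Matrix.of (fun i j => ((d i : ℂ) * α i) * star ((d j : ℂ) * α j))) *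
          Matrix.diagonal (fun k => (d k : ℂ)))) *ᵥ α) = 0 := by
  set D := Matrix.diagonal (fun k => (d k : ℂ))
  have hDα : D *ᵥ α = fun k => (d k : ℂ) * α k := funext (Matrix.mulVec_diagonal _ _)
  have hnorm : (((∑ k, ‖(d k : ℂ) * α k‖ ^ 2 : ℝ)) : ℂ) = star (D *ᵥ α) ⬝ᵥ (D *ᵥ α) := by
    rw [hDα]
    push_cast
    exact Finset.sum_congr rfl fun k _ => (Complex.conj_mul' _).symm
  have hrank : Matrix.of (fun i j => ((d i : ℂ) * α i) * star ((d j : ℂ) * α j)) =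
      Matrix.vecMulVec (D *ᵥ α) (star (D *ᵥ α)) := by
    rw [hDα]
    rfl
  rw [hnorm, hrank, Matrix.smul_mulVec, ← Matrix.mulVec_mulVec, ← Matrix.mulVec_mulVec,
    Matrix.one_sub_inv_smul_vecMulVec_star_mulVec_self, Matrix.mulVec_zero, smul_zero,
    dotProduct_zero]

/-- Proposition 2, first claim: the usual Wald quadratic form
`αᴴ [‖s‖² D (I - (Dα)(Dα)ᴴ/‖Dα‖²) D] α` is identically zero, so the usual Wald
test statistic of the passive-radar problem is null. -/
theorem stmt12 (L N : ℕ) (hN : 1 ≤ N)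
    (s : EuclideanSpace ℂ (Fin L)) (hs : s ≠ 0)
    (α : Fin N → ℂ) (hα : α ≠ 0) (d : Fin N → ℝ) (hd : ∀ k, 0 < d k) :
    star α ⬝ᵥ
      ((((‖s‖ ^ 2 : ℝ) : ℂ) •
        (Matrix.diagonal (fun k => (d k : ℂ)) *
          (1 - (((∑ k, ‖(d k : ℂ) * α k‖ ^ 2 : ℝ)) : ℂ)⁻¹ •
            Matrix.of (fun i j => ((d i : ℂ) * α i) * star ((d j : ℂ) * α j))) *
          Matrix.diagonal (fun k => (d k : ℂ)))) *ᵥ α) = 0 :=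
  stmt12_general L N s α d
end
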